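/- Let x be K-sparse with support T, set y = Φx, and let Λ¹ be the N indices of largest |⟨φ_i, y⟩|. If Φ satisfies the RIP of order K+N with δ_{K+N} < √N/(√K + √N), then Λ¹ ∩ T ≠ ∅; i.e., the first iteration of generalized OMP with N selections picks at least one correct index. -/

import Mathlib

open Matrix

/-- A vector is K-sparse if it has at most K nonzero entries. -/
def IsSparse {n : ℕ} (K : ℕ) (x : Fin n → ℝ) : Prop :=
  (Finset.univ.filter fun i => x i ≠ 0).card ≤ K

/-- The Euclidean (ℓ₂) norm of a finitely-indexed real vector. -/
noncomputable def l2norm {ι : Type*} [Fintype ι] (v : ι → ℝ) : ℝ :=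
  Real.sqrt (∑ i, v i ^ 2)

/-- Φ satisfies the RIP of order K with constant δ. -/
def SatisfiesRIP {m n : ℕ} (Φ : Matrix (Fin m) (Fin n) ℝ) (K : ℕ) (δ : ℝ) : Prop :=
  ∀ x : Fin n → ℝ, IsSparse K x →
    (1 - δ) * l2norm x ^ 2 ≤ l2norm (Φ.mulVec x) ^ 2 ∧
    l2norm (Φ.mulVec x) ^ 2 ≤ (1 + δ) * l2norm x ^ 2

/-- The column-submatrix of Φ consisting of columns indexed by I. -/
def colSub {m n : ℕ} (Φ : Matrix (Fin m) (Fin n) ℝ) (I : Finset (Fin n)) :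
    Matrix (Fin m) I ℝ :=
  fun i j => Φ i (j : Fin n)

/-!
Write `c = Φᵀ Φ x` and suppose `Λ` misses the support `T` of `x`. Since `Λ` and `T` are disjoint
and `|Λ| + |T| ≤ K + N`, the RIP bounds the correlation of `Φ c_Λ` with `Φ x`, which gives
`‖c_Λ‖ ≤ δ ‖x‖`; on the other hand `(1 - δ) ‖x‖² ≤ ‖Φ x‖² = ⟨x, c_T⟩ ≤ ‖x‖ ‖c_T‖`. As `Λ` collects
the `N` largest entries of `|c|`, the mean square of `c` over `Λ` dominates that over `T`, so
`√N (1 - δ) ‖x‖ ≤ √N ‖c_T‖ ≤ √K ‖c_Λ‖ ≤ √K δ ‖x‖`, which is excluded by `δ < √N / (√K + √N)`.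
-/

open Function

section L2Norm

variable {ι : Type*} [Fintype ι]

lemma l2norm_eq_norm (v : ι → ℝ) : l2norm v = ‖WithLp.toLp 2 v‖ := by
  simp [l2norm, EuclideanSpace.norm_eq]

lemma l2norm_nonneg (v : ι → ℝ) : 0 ≤ l2norm v := Real.sqrt_nonneg _

lemma l2norm_sq (v : ι → ℝ) : l2norm v ^ 2 = v ⬝ᵥ v := by
  rw [l2norm, Real.sq_sqrt (by positivity)]
  simp [dotProduct, sq]

lemma l2norm_pos {v : ι → ℝ} (hv : v ≠ 0) : 0 < l2norm v := by
  rw [l2norm_eq_norm]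
  simpa using hv

lemma l2norm_smul (a : ℝ) (v : ι → ℝ) : l2norm (a • v) = |a| * l2norm v := by
  simp [l2norm_eq_norm, norm_smul]

lemma abs_dotProduct_le_l2norm_mul (u v : ι → ℝ) : |u ⬝ᵥ v| ≤ l2norm u * l2norm v := by
  simpa [l2norm_eq_norm, EuclideanSpace.inner_eq_star_dotProduct, dotProduct_comm] using
    abs_real_inner_le_norm (WithLp.toLp 2 u) (WithLp.toLp 2 v)

lemma l2norm_indicator_sq (s : Finset ι) (f : ι → ℝ) :
    l2norm ((s : Set ι).indicator f) ^ 2 = ∑ i ∈ s, f i ^ 2 := by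
  rw [l2norm, Real.sq_sqrt (by positivity), ← Finset.sum_indicator_subset _ s.subset_univ]
  refine Finset.sum_congr rfl fun i _ => ?_
  by_cases hi : i ∈ s <;> simp [hi]

end L2Norm

lemma card_mul_sum_sq_le_card_mul_sum_sq {ι : Type*} (s t : Finset ι) (f : ι → ℝ)
    (h : ∀ i ∈ s, ∀ j ∈ t, |f j| ≤ |f i|) :
    s.card * ∑ j ∈ t, f j ^ 2 ≤ t.card * ∑ i ∈ s, f i ^ 2 :=
  calc s.card * ∑ j ∈ t, f j ^ 2 = ∑ i ∈ s, ∑ j ∈ t, f j ^ 2 := by simp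
    _ ≤ ∑ i ∈ s, ∑ j ∈ t, f i ^ 2 :=
      Finset.sum_le_sum fun i hi => Finset.sum_le_sum fun j hj => sq_le_sq.2 (h i hi j hj)
    _ = t.card * ∑ i ∈ s, f i ^ 2 := by rw [Finset.sum_comm]; simp

lemma sqrt_card_mul_l2norm_indicator_le {ι : Type*} [Fintype ι] (s t : Finset ι) (f : ι → ℝ)
    (h : ∀ i ∈ s, ∀ j ∈ t, |f j| ≤ |f i|) :
    √s.card * l2norm ((t : Set ι).indicator f) ≤ √t.card * l2norm ((s : Set ι).indicator f) := by
  refine (pow_le_pow_iff_left₀ (mul_nonneg (Real.sqrt_nonneg _) (l2norm_nonneg _))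
    (mul_nonneg (Real.sqrt_nonneg _) (l2norm_nonneg _)) two_ne_zero).1 ?_
  simp only [mul_pow, Real.sq_sqrt (Nat.cast_nonneg _), l2norm_indicator_sq]
  exact card_mul_sum_sq_le_card_mul_sum_sq s t f h

lemma isSparse_of_support_subset {n K : ℕ} {x : Fin n → ℝ} {S : Finset (Fin n)}
    (hx : support x ⊆ S) (hS : S.card ≤ K) : IsSparse K x :=
  (Finset.card_le_card fun j hj => hx (by simpa using hj)).trans hS

lemma mul_lt_one_sub_mul_of_lt_div_add {δ p q : ℝ} (hδ : 0 ≤ δ) (hpq : 0 ≤ p + q)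
    (h : δ < q / (p + q)) : δ * p < (1 - δ) * q := by
  rcases hpq.eq_or_lt with hpq | hpq
  · rw [← hpq, div_zero] at h
    exact absurd hδ h.not_ge
  · rw [lt_div_iff₀ hpq] at h
    linarith

namespace SatisfiesRIP

variable {m n K : ℕ} {Φ : Matrix (Fin m) (Fin n) ℝ} {δ : ℝ}

lemma nonneg (h : SatisfiesRIP Φ K δ) {x : Fin n → ℝ} (hx : IsSparse K x) (hx0 : x ≠ 0) :
    0 ≤ δ := by
  obtain ⟨hlow, hup⟩ := h x hx
  nlinarith [pow_pos (l2norm_pos hx0) 2]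

/-- Polarization: `4 ⟨Φu, Φv⟩ = ‖Φ(u + v)‖² - ‖Φ(u - v)‖²`, where `u + v` and `u - v` both have
squared norm `‖u‖² + ‖v‖²` because the supports are disjoint. -/
lemma abs_dotProduct_mulVec_le_half (h : SatisfiesRIP Φ K δ) {u v : Fin n → ℝ}
    {A B : Finset (Fin n)} (hu : support u ⊆ A) (hv : support v ⊆ B) (hAB : Disjoint A B)
    (hK : A.card + B.card ≤ K) :
    |(Φ *ᵥ u) ⬝ᵥ (Φ *ᵥ v)| ≤ δ / 2 * (l2norm u ^ 2 + l2norm v ^ 2) := by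
  have horth : u ⬝ᵥ v = 0 := by
    refine Finset.sum_eq_zero fun j _ => ?_
    by_cases hj : j ∈ A
    · rw [notMem_support.1 fun hjv => Finset.disjoint_left.1 hAB hj (hv hjv), mul_zero]
    · rw [notMem_support.1 fun hju => hj (hu hju), zero_mul]
  have hsparse : ∀ w : Fin n → ℝ, support w ⊆ u.support ∪ v.support → IsSparse K w :=
    fun w hw => isSparse_of_support_subset (S := A ∪ B)
      (by push_cast; exact hw.trans (Set.union_subset_union hu hv))
      ((Finset.card_union_le A B).trans hK)
  have hplus : l2norm (u + v) ^ 2 = l2norm u ^ 2 + l2norm v ^ 2 := by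
    simp only [l2norm_sq, add_dotProduct, dotProduct_add, horth, dotProduct_comm v u]; ring
  have hminus : l2norm (u - v) ^ 2 = l2norm u ^ 2 + l2norm v ^ 2 := by
    simp only [l2norm_sq, sub_dotProduct, dotProduct_sub, horth, dotProduct_comm v u]; ring
  have hpolar : 4 * ((Φ *ᵥ u) ⬝ᵥ (Φ *ᵥ v))
      = l2norm (Φ *ᵥ (u + v)) ^ 2 - l2norm (Φ *ᵥ (u - v)) ^ 2 := by
    simp only [l2norm_sq, mulVec_add, mulVec_sub, add_dotProduct, dotProduct_add,
      sub_dotProduct, dotProduct_sub, dotProduct_comm (Φ *ᵥ v) (Φ *ᵥ u)]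
    ring
  obtain ⟨hplus_low, hplus_up⟩ := h (u + v) (hsparse _ (support_add u v))
  obtain ⟨hminus_low, hminus_up⟩ := h (u - v) (hsparse _ (support_sub u v))
  rw [hplus] at hplus_low hplus_up
  rw [hminus] at hminus_low hminus_up
  rw [abs_le]
  constructor <;> linarith

lemma abs_dotProduct_mulVec_le (h : SatisfiesRIP Φ K δ) {u v : Fin n → ℝ}
    {A B : Finset (Fin n)} (hu : support u ⊆ A) (hv : support v ⊆ B) (hAB : Disjoint A B)
    (hK : A.card + B.card ≤ K) :
    |(Φ *ᵥ u) ⬝ᵥ (Φ *ᵥ v)| ≤ δ * l2norm u * l2norm v := by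
  rcases eq_or_ne u 0 with rfl | hu0
  · simp [l2norm]
  rcases eq_or_ne v 0 with rfl | hv0
  · simp [l2norm]
  have ha := l2norm_pos hu0
  have hb := l2norm_pos hv0
  have hunit := h.abs_dotProduct_mulVec_le_half (u := (l2norm u)⁻¹ • u)
    (v := (l2norm v)⁻¹ • v) ((support_const_smul_subset _ _).trans hu)
    ((support_const_smul_subset _ _).trans hv) hAB hK
  simp only [mulVec_smul, smul_dotProduct, dotProduct_smul, smul_eq_mul, l2norm_smul, abs_mul,
    abs_inv, abs_of_pos ha, abs_of_pos hb, inv_mul_cancel₀ ha.ne', inv_mul_cancel₀ hb.ne'] at hunit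
  field_simp at hunit
  linarith

lemma l2norm_indicator_gram_le (h : SatisfiesRIP Φ K δ) (hδ : 0 ≤ δ) {x : Fin n → ℝ}
    {s T : Finset (Fin n)} (hx : support x ⊆ T) (hsT : Disjoint s T) (hK : s.card + T.card ≤ K) :
    l2norm ((s : Set (Fin n)).indicator (Φᵀ *ᵥ (Φ *ᵥ x))) ≤ δ * l2norm x := by
  set u := (s : Set (Fin n)).indicator (Φᵀ *ᵥ (Φ *ᵥ x))
  have hu : l2norm u ^ 2 ≤ δ * l2norm u * l2norm x :=
    calc l2norm u ^ 2 = u ⬝ᵥ (Φᵀ *ᵥ (Φ *ᵥ x)) := by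
          rw [l2norm_sq]
          refine Finset.sum_congr rfl fun i _ => ?_
          by_cases hi : i ∈ s <;> simp [u, hi]
      _ = (Φ *ᵥ u) ⬝ᵥ (Φ *ᵥ x) := by rw [dotProduct_mulVec, vecMul_transpose]
      _ ≤ δ * l2norm u * l2norm x :=
          (le_abs_self _).trans (h.abs_dotProduct_mulVec_le Set.support_indicator_subset hx hsT hK)
  rcases (l2norm_nonneg u).eq_or_lt with hu0 | hupos
  · rw [← hu0]
    exact mul_nonneg hδ (l2norm_nonneg x)
  · nlinarith

lemma mul_l2norm_le_l2norm_indicator_gram (h : SatisfiesRIP Φ K δ) {x : Fin n → ℝ}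
    {T : Finset (Fin n)} (hx : support x ⊆ T) (hK : T.card ≤ K) :
    (1 - δ) * l2norm x ≤ l2norm ((T : Set (Fin n)).indicator (Φᵀ *ᵥ (Φ *ᵥ x))) := by
  set c := (T : Set (Fin n)).indicator (Φᵀ *ᵥ (Φ *ᵥ x))
  have hx2 : (1 - δ) * l2norm x ^ 2 ≤ l2norm x * l2norm c :=
    calc (1 - δ) * l2norm x ^ 2 ≤ l2norm (Φ *ᵥ x) ^ 2 := (h x (isSparse_of_support_subset hx hK)).1
      _ = x ⬝ᵥ (Φᵀ *ᵥ (Φ *ᵥ x)) := by rw [l2norm_sq, dotProduct_mulVec x Φᵀ, vecMul_transpose]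
      _ = x ⬝ᵥ c := by
          refine Finset.sum_congr rfl fun i _ => ?_
          by_cases hi : i ∈ T
          · simp [c, hi]
          · simp [c, hi, notMem_support.1 fun hxi => hi (hx hxi)]
      _ ≤ l2norm x * l2norm c := (le_abs_self _).trans (abs_dotProduct_le_l2norm_mul x c)
  rcases (l2norm_nonneg x).eq_or_lt with hx0 | hxpos
  · rw [← hx0, mul_zero]
    exact l2norm_nonneg c
  · nlinarith

end SatisfiesRIP

theorem gomp_first_iteration_success_general {m n : ℕ} (Φ : Matrix (Fin m) (Fin n) ℝ)
    (x : Fin n → ℝ) (hx : x ≠ 0) (K N : ℕ)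
    (T Λ : Finset (Fin n)) (hT : T = Finset.univ.filter fun i => x i ≠ 0)
    (hTK : T.card ≤ K) (hΛ : Λ.card = N) (y : Fin m → ℝ) (hy : y = Φ.mulVec x)
    (hmax : ∀ i ∈ Λ, ∀ j ∉ Λ, |Φᵀ.mulVec y j| ≤ |Φᵀ.mulVec y i|)
    (δ : ℝ) (hRIP : SatisfiesRIP Φ (K + N) δ)
    (hδ : δ < Real.sqrt N / (Real.sqrt K + Real.sqrt N)) :
    (Λ ∩ T).Nonempty := by
  subst hy
  by_contra hΛT
  have hdisj : Disjoint Λ T :=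
    Finset.disjoint_iff_inter_eq_empty.2 (Finset.not_nonempty_iff_eq_empty.1 hΛT)
  have hxT : support x ⊆ T := by simp [hT]
  have hδ0 : 0 ≤ δ := hRIP.nonneg (isSparse_of_support_subset hxT (by omega)) hx
  set c := Φᵀ *ᵥ (Φ *ᵥ x)
  have htop : ∀ i ∈ Λ, ∀ j ∈ T, |c j| ≤ |c i| :=
    fun i hi j hj => hmax i hi j (Finset.disjoint_right.1 hdisj hj)
  have hcompare : √N * ((1 - δ) * l2norm x) ≤ √K * (δ * l2norm x) :=
    calc √N * ((1 - δ) * l2norm x) ≤ √N * l2norm ((T : Set (Fin n)).indicator c) :=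
          mul_le_mul_of_nonneg_left (hRIP.mul_l2norm_le_l2norm_indicator_gram hxT (by omega))
            (Real.sqrt_nonneg _)
      _ ≤ √T.card * l2norm ((Λ : Set (Fin n)).indicator c) := by
          simpa [hΛ] using sqrt_card_mul_l2norm_indicator_le Λ T c htop
      _ ≤ √K * (δ * l2norm x) :=
          mul_le_mul (Real.sqrt_le_sqrt (by exact_mod_cast hTK))
            (hRIP.l2norm_indicator_gram_le hδ0 hxT hdisj (by omega)) (l2norm_nonneg _)
            (Real.sqrt_nonneg _)
  have hthreshold := mul_lt_one_sub_mul_of_lt_div_add hδ0 (by positivity) hδ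
  nlinarith [l2norm_pos hx]

theorem gomp_first_iteration_success {m n : ℕ} (Φ : Matrix (Fin m) (Fin n) ℝ)
    (x : Fin n → ℝ) (hx : x ≠ 0) (K N : ℕ) (hN : 0 < N)
    (T Λ : Finset (Fin n)) (hT : T = Finset.univ.filter fun i => x i ≠ 0)
    (hTK : T.card ≤ K) (hΛ : Λ.card = N) (y : Fin m → ℝ) (hy : y = Φ.mulVec x)
    (hmax : ∀ i ∈ Λ, ∀ j ∉ Λ, |Φᵀ.mulVec y j| ≤ |Φᵀ.mulVec y i|)
    (δ : ℝ) (hRIP : SatisfiesRIP Φ (K + N) δ)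
    (hδ : δ < Real.sqrt N / (Real.sqrt K + Real.sqrt N)) :
    (Λ ∩ T).Nonempty :=
  gomp_first_iteration_success_general Φ x hx K N T Λ hT hTK hΛ y hy hmax δ hRIP hδ
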